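/- Let p be an odd prime and let m ≤ l be natural numbers with m odd. Let δ ∈ 𝔽_p be a non-square unit and E_m = diag(1, …, 1, δ). Then the congruence orbit S₁ = {u : ∃ γ ∈ GL_l(𝔽_p), γᵀ · diag(1_m, 0_{l−m}) · γ = u} and the congruence orbit S₂ = {u : ∃ γ ∈ GL_l(𝔽_p), γᵀ · diag(E_m, 0_{l−m}) · γ = u} have the same cardinality: #S₁ = #S₂. (Equivalently, the character sum W^l_m(χ_p) vanishes for m odd.) -/

import Mathlib

/-!
Scaling by a unit `δ` maps the congruence orbit of `A` bijectively onto that of `δ • A`, so it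
suffices that `diag(E_m, 0)` is congruent to `δ • diag(1_m, 0)`. Write `δ⁻¹ = a² + b²`; the
rotation `!![a, -b; b, a]` is a congruence from `δ • 1₂` to `1₂`. Since `m - 1` is even, pairing
up all coordinates but the last one turns `δ • 1_m` into `E_m`.
-/

open Matrix Pointwise

namespace Matrix

variable {m n o R : Type*} [DecidableEq n] [DecidableEq o] [CommRing R]

theorem submatrix_smul_one_equiv [DecidableEq m] (e : m ≃ n) (c : R) :
    (c • 1 : Matrix n n R).submatrix e e = c • 1 := by
  rw [smul_one_eq_diagonal, smul_one_eq_diagonal, submatrix_diagonal_equiv]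
  rfl

theorem fromBlocks_smul_one (c : R) :
    fromBlocks (c • 1 : Matrix n n R) 0 0 (c • 1 : Matrix o o R) = c • 1 := by
  rw [← fromBlocks_one, fromBlocks_smul]
  simp only [smul_zero]

variable [Fintype n] [Fintype o]

def congrOrbit (A : Matrix n n R) : Set (Matrix n n R) :=
  {u | ∃ γ : GL n R, (γ : Matrix n n R)ᵀ * A * γ = u}

theorem mul_mem_congrOrbit (A : Matrix n n R) {γ : Matrix n n R} (hγ : IsUnit γ.det) :
    γᵀ * A * γ ∈ congrOrbit A :=
  ⟨GeneralLinearGroup.mk'' γ hγ, rfl⟩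

theorem self_mem_congrOrbit (A : Matrix n n R) : A ∈ congrOrbit A :=
  ⟨1, by simp⟩

theorem congrOrbit_subset_of_mem {A B : Matrix n n R} (h : B ∈ congrOrbit A) :
    congrOrbit B ⊆ congrOrbit A := by
  obtain ⟨γ, rfl⟩ := h
  rintro _ ⟨η, rfl⟩
  exact ⟨γ * η, by simp [transpose_mul, Matrix.mul_assoc]⟩

theorem mem_congrOrbit_symm {A B : Matrix n n R} (h : B ∈ congrOrbit A) :
    A ∈ congrOrbit B := by
  obtain ⟨γ, rfl⟩ := h
  refine ⟨γ⁻¹, ?_⟩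
  have hγ : ((γ⁻¹ : GL n R) : Matrix n n R)ᵀ * (γ : Matrix n n R)ᵀ = 1 := by
    rw [← transpose_mul, ← Units.val_mul, mul_inv_cancel, Units.val_one, transpose_one]
  calc ((γ⁻¹ : GL n R) : Matrix n n R)ᵀ * ((γ : Matrix n n R)ᵀ * A * γ) * ↑γ⁻¹
      = (((γ⁻¹ : GL n R) : Matrix n n R)ᵀ * (γ : Matrix n n R)ᵀ) * A * ↑(γ * γ⁻¹) := by
        simp only [Units.val_mul, Matrix.mul_assoc]
    _ = A := by rw [hγ, mul_inv_cancel, Units.val_one, Matrix.one_mul, Matrix.mul_one]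

theorem congrOrbit_smul (c : R) (A : Matrix n n R) :
    congrOrbit (c • A) = c • congrOrbit A := by
  ext u
  simp only [congrOrbit, Set.mem_smul_set, Set.mem_ofPred_eq]
  constructor
  · rintro ⟨γ, rfl⟩
    exact ⟨_, ⟨γ, rfl⟩, by simp⟩
  · rintro ⟨_, ⟨γ, rfl⟩, rfl⟩
    exact ⟨γ, by simp⟩

theorem congrOrbit_eq_of_mem {A B : Matrix n n R} (h : B ∈ congrOrbit A) :
    congrOrbit B = congrOrbit A :=
  (congrOrbit_subset_of_mem h).antisymm (congrOrbit_subset_of_mem (mem_congrOrbit_symm h))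

theorem natCard_congrOrbit_smul {c : R} (hc : IsUnit c) (A : Matrix n n R) :
    Nat.card (congrOrbit (c • A)) = Nat.card (congrOrbit A) := by
  obtain ⟨c, rfl⟩ := hc
  rw [congrOrbit_smul, ← Units.smul_def, Nat.card_coe_set_eq, Nat.card_coe_set_eq,
    Set.ncard_smul_set]

theorem fromBlocks_mem_congrOrbit {P Q : Matrix n n R} {S T : Matrix o o R}
    (hP : P ∈ congrOrbit Q) (hS : S ∈ congrOrbit T) :
    fromBlocks P 0 0 S ∈ congrOrbit (fromBlocks Q 0 0 T) := by
  obtain ⟨γ, rfl⟩ := hP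
  obtain ⟨η, rfl⟩ := hS
  have hdet : IsUnit (fromBlocks (γ : Matrix n n R) 0 0 (η : Matrix o o R)).det := by
    rw [det_fromBlocks_zero₂₁]
    exact ((isUnit_iff_isUnit_det _).1 γ.isUnit).mul ((isUnit_iff_isUnit_det _).1 η.isUnit)
  convert mul_mem_congrOrbit _ hdet using 1
  simp [fromBlocks_transpose, fromBlocks_multiply]

theorem submatrix_mem_congrOrbit [Fintype m] [DecidableEq m] (e : m ≃ n)
    {P Q : Matrix n n R} (h : P ∈ congrOrbit Q) :
    P.submatrix e e ∈ congrOrbit (Q.submatrix e e) := by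
  obtain ⟨γ, rfl⟩ := h
  have hdet : IsUnit ((γ : Matrix n n R).submatrix e e).det := by
    rw [det_submatrix_equiv_self]
    exact (isUnit_iff_isUnit_det _).1 γ.isUnit
  convert mul_mem_congrOrbit _ hdet using 1
  rw [transpose_submatrix, submatrix_mul_equiv, submatrix_mul_equiv]

theorem blockDiagonal_mem_congrOrbit {P Q : o → Matrix n n R}
    (h : ∀ i, P i ∈ congrOrbit (Q i)) :
    blockDiagonal P ∈ congrOrbit (blockDiagonal Q) := by
  choose γ hγ using h
  have hdet : IsUnit (blockDiagonal fun i => (γ i : Matrix n n R)).det := by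
    rw [det_blockDiagonal]
    exact IsUnit.prod_univ_iff.2 fun i => (isUnit_iff_isUnit_det _).1 (γ i).isUnit
  convert mul_mem_congrOrbit _ hdet using 1
  rw [blockDiagonal_transpose, ← blockDiagonal_mul, ← blockDiagonal_mul]
  exact congrArg blockDiagonal (funext fun i => (hγ i).symm)

section SumOfTwoSquares

variable {c a b : R}

theorem one_mem_congrOrbit_smul_one_fin_two (hab : c * (a ^ 2 + b ^ 2) = 1) :
    (1 : Matrix (Fin 2) (Fin 2) R) ∈ congrOrbit (c • 1) := by
  have hdet : IsUnit (!![a, -b; b, a]).det := by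
    rw [det_fin_two_of]
    exact IsUnit.of_mul_eq_one_right c (by linear_combination hab)
  convert mul_mem_congrOrbit _ hdet using 1
  ext i j
  fin_cases i <;> fin_cases j <;> simp [Matrix.mul_apply, Fin.sum_univ_two] <;>
    first | ring1 | linear_combination -hab

theorem one_mem_congrOrbit_smul_one_of_even (hab : c * (a ^ 2 + b ^ 2) = 1)
    (hn : Even (Fintype.card n)) :
    (1 : Matrix n n R) ∈ congrOrbit (c • 1) := by
  obtain ⟨k, hk⟩ := hn
  let e : n ≃ Fin 2 × Fin k := Fintype.equivOfCardEq (by simp [hk, two_mul])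
  have hblock := blockDiagonal_mem_congrOrbit
    fun _ : Fin k => one_mem_congrOrbit_smul_one_fin_two hab
  have hscalar :
      blockDiagonal (fun _ : Fin k => (c • 1 : Matrix (Fin 2) (Fin 2) R)) = c • 1 := by
    simp only [smul_one_eq_diagonal, blockDiagonal_diagonal]
  rw [hscalar, show blockDiagonal (fun _ => 1) = 1 from blockDiagonal_one] at hblock
  simpa only [submatrix_smul_one_equiv, submatrix_one_equiv] using
    submatrix_mem_congrOrbit e hblock

theorem diagonal_mem_congrOrbit_smul_one_of_odd (hab : c * (a ^ 2 + b ^ 2) = 1) (i₀ : n)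
    (hn : Odd (Fintype.card n)) :
    diagonal (fun i => if i = i₀ then c else 1) ∈ congrOrbit (c • 1) := by
  let e := Equiv.sumCompl (· = i₀)
  have heven : Even (Fintype.card {i // ¬i = i₀}) := by
    rw [Fintype.card_subtype_compl, Fintype.card_subtype_eq]
    exact hn.tsub_odd odd_one
  have hblocks := submatrix_mem_congrOrbit e.symm <| fromBlocks_mem_congrOrbit
    (self_mem_congrOrbit (c • 1 : Matrix {i // i = i₀} {i // i = i₀} R))
    (one_mem_congrOrbit_smul_one_of_even hab heven)
  have hleft : (fromBlocks (c • 1) 0 0 1).submatrix e.symm e.symm =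
      diagonal (fun i => if i = i₀ then c else 1) := by
    rw [smul_one_eq_diagonal, ← diagonal_one, fromBlocks_diagonal, submatrix_diagonal_equiv]
    congr 1
    ext i
    by_cases hi : i = i₀
    · simp [hi, Equiv.sumCompl_symm_apply_of_pos, e]
    · simp [hi, Equiv.sumCompl_symm_apply_of_neg, e]
  rwa [hleft, fromBlocks_smul_one, submatrix_smul_one_equiv] at hblocks

end SumOfTwoSquares

end Matrix

open Matrix

theorem stmt_8 (p : ℕ) (hp : p.Prime) (l m : ℕ)
    (hodd : Odd m)
    (δ : ZMod p) (hδunit : IsUnit δ) :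
    Nat.card {u : Matrix (Fin m ⊕ Fin (l - m)) (Fin m ⊕ Fin (l - m)) (ZMod p) //
        ∃ γ : GL (Fin m ⊕ Fin (l - m)) (ZMod p),
          (γ : Matrix (Fin m ⊕ Fin (l - m)) (Fin m ⊕ Fin (l - m)) (ZMod p))ᵀ *
            Matrix.fromBlocks 1 0 0 0 *
            (γ : Matrix (Fin m ⊕ Fin (l - m)) (Fin m ⊕ Fin (l - m)) (ZMod p)) = u} =
      Nat.card {u : Matrix (Fin m ⊕ Fin (l - m)) (Fin m ⊕ Fin (l - m)) (ZMod p) //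
        ∃ γ : GL (Fin m ⊕ Fin (l - m)) (ZMod p),
          (γ : Matrix (Fin m ⊕ Fin (l - m)) (Fin m ⊕ Fin (l - m)) (ZMod p))ᵀ *
            Matrix.fromBlocks
              (Matrix.diagonal (fun i : Fin m => if (i : ℕ) = m - 1 then δ else 1)) 0 0 0 *
            (γ : Matrix (Fin m ⊕ Fin (l - m)) (Fin m ⊕ Fin (l - m)) (ZMod p)) = u} := by
  have : Fact p.Prime := ⟨hp⟩
  obtain ⟨a, b, hab⟩ := ZMod.sq_add_sq p δ⁻¹
  have hδab : δ * (a ^ 2 + b ^ 2) = 1 := by rw [hab, mul_inv_cancel₀ hδunit.ne_zero]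
  have hEm : diagonal (fun i : Fin m => if (i : ℕ) = m - 1 then δ else 1) ∈
      congrOrbit (δ • 1) := by
    convert diagonal_mem_congrOrbit_smul_one_of_odd hδab
      (⟨m - 1, Nat.sub_lt hodd.pos one_pos⟩ : Fin m) (by simpa using hodd) using 4 with i
    rw [Fin.ext_iff]
  have hE : fromBlocks (diagonal fun i : Fin m => if (i : ℕ) = m - 1 then δ else 1) 0 0 0 ∈
      congrOrbit (δ • fromBlocks (1 : Matrix (Fin m) (Fin m) (ZMod p)) 0 0
        (0 : Matrix (Fin (l - m)) (Fin (l - m)) (ZMod p))) := by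
    simpa only [fromBlocks_smul, smul_zero] using
      fromBlocks_mem_congrOrbit hEm (self_mem_congrOrbit 0)
  change Nat.card (congrOrbit _) = Nat.card (congrOrbit _)
  rw [congrOrbit_eq_of_mem hE, natCard_congrOrbit_smul hδunit]
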